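/- In the bounded modular setting, let q ∈ ℝ, let the q-creation, q-annihilation operators c_ξ, a_ξ and the right operators r_ξ, r*_ξ on the algebraic Fock space F(H) be defined using the inner product ⟨·,·⟩_U, and let J_F be the conjugate-linear map on F(H) determined by J_F(Ω) = Ω and J_F(v₁⊗…⊗vₙ) = A^{-1/2}𝒥vₙ ⊗ ⋯ ⊗ A^{-1/2}𝒥v₁. Then for every ξ ∈ H_ℝ and all η₁, …, ηₙ ∈ H_ℝ (n ≥ 0), J_F(s_ξ(η₁⊗…⊗ηₙ)) = d_{A^{-1/2}ξ}(J_F(η₁⊗…⊗ηₙ)), where s_ξ = c_ξ + a_ξ and d_{A^{-1/2}ξ} = r_{A^{-1/2}ξ} + r*_{A^{-1/2}ξ}. (In particular, J_F(η₁⊗…⊗ηₙ) = A^{-1/2}ηₙ ⊗ ⋯ ⊗ A^{-1/2}η₁ for ηᵢ ∈ H_ℝ.) -/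

import Mathlib

/-! Since `J_F` reverses simple tensors, it turns left creation into right creation, and it
exchanges the weights `q^{i-1}` and `q^{n-i}` of left and right annihilation. Being
conjugate-linear, it conjugates the coefficients, so everything reduces to
`conj ⟨ξ, η⟩_U = ⟨A^{-1/2} ξ, A^{-1/2} η⟩_U` for `ξ, η ∈ H_ℝ`. This holds because `𝒥` is
antiunitary and intertwines `A` with `A⁻¹`, whence `𝒥 (1 + A⁻¹)⁻¹ 𝒥 = (1 + A)⁻¹ = A⁻¹ (1 + A⁻¹)⁻¹`,
while `A^{-1/2} (1 + A⁻¹)⁻¹ A^{-1/2} = A⁻¹ (1 + A⁻¹)⁻¹` because `A^{-1/2}` commutes with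
`A⁻¹ = (A^{-1/2})²`. -/

noncomputable section

variable {H : Type*} [NormedAddCommGroup H] [InnerProductSpace ℂ H]

/-- The simple tensor `ζ 0 ⊗ ⋯ ⊗ ζ (n-1)` in the algebraic Fock space
`F(H) = ⨁ₙ H^{⊗n}`, realized as the tensor algebra (for `n = 0` this is the
vacuum vector `Ω = 1`). -/
def st (n : ℕ) (ζ : Fin n → H) : TensorAlgebra ℂ H :=
  (List.ofFn fun i => TensorAlgebra.ι ℂ (ζ i)).prod

/-- Remove the `i`-th entry from a tuple. -/
def removeNth {α : Type*} : {n : ℕ} → Fin n → (Fin n → α) → Fin (n - 1) → α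
  | 0, i, _ => i.elim0
  | _ + 1, i, ζ => fun j => ζ (i.succAbove j)

/-- `c` is the family of (left) `q`-creation operators. -/
def IsCreation (c : H → Module.End ℂ (TensorAlgebra ℂ H)) : Prop :=
  ∀ (ξ : H) (n : ℕ) (ζ : Fin n → H), c ξ (st n ζ) = st (n + 1) (Fin.cons ξ ζ)

/-- `a` is the family of (left) `q`-annihilation operators relative to the inner
product `⟨ξ, η⟩_U = 2⟨T ξ, η⟩`. -/
def IsAnnihilationU (q : ℝ) (T : H →L[ℂ] H)
    (a : H → Module.End ℂ (TensorAlgebra ℂ H)) : Prop :=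
  ∀ (ξ : H) (n : ℕ) (ζ : Fin n → H),
    a ξ (st n ζ) =
      ∑ i : Fin n,
        ((q : ℂ) ^ (i : ℕ) * (2 * (inner ℂ (T ξ) (ζ i) : ℂ))) • st (n - 1) (removeNth i ζ)

/-- `r` is the family of right `q`-creation operators. -/
def IsRightCreation (r : H → Module.End ℂ (TensorAlgebra ℂ H)) : Prop :=
  ∀ (ξ : H) (n : ℕ) (ζ : Fin n → H), r ξ (st n ζ) = st (n + 1) (Fin.snoc ζ ξ)

/-- `rs` is the family of right `q`-annihilation operators relative to the inner
product `⟨ξ, η⟩_U = 2⟨T ξ, η⟩`. -/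
def IsRightAnnihilationU (q : ℝ) (T : H →L[ℂ] H)
    (rs : H → Module.End ℂ (TensorAlgebra ℂ H)) : Prop :=
  ∀ (ξ : H) (n : ℕ) (ζ : Fin n → H),
    rs ξ (st n ζ) =
      ∑ i : Fin n,
        ((q : ℂ) ^ (n - 1 - (i : ℕ)) * (2 * (inner ℂ (T ξ) (ζ i) : ℂ))) •
          st (n - 1) (removeNth i ζ)

open ComplexConjugate

theorem removeNth_rev_comp {α β : Type*} (f : α → β) {n : ℕ} (i : Fin n) (v : Fin n → α) :
    removeNth i.rev (fun k => f (v k.rev)) = fun j => f (removeNth i v j.rev) := by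
  cases n with
  | zero => exact i.elim0
  | succ m =>
    funext j
    show f (v (i.rev.succAbove j).rev) = f (v (i.succAbove j.rev))
    rw [Fin.rev_succAbove, Fin.rev_rev]

theorem inner_map_map_of_conj_norm_map {E : Type*} [NormedAddCommGroup E] [InnerProductSpace ℂ E]
    (J : E →ₗ⋆[ℂ] E) (hJ : ∀ x, ‖J x‖ = ‖x‖) (x y : E) :
    inner ℂ (J x) (J y) = conj (inner ℂ x y) := by
  have hI : (RCLike.I : ℂ) = Complex.I := rfl
  have e₁ : J x - Complex.I • J y = J (x + Complex.I • y) := by simp [sub_eq_add_neg]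
  have e₂ : J x + Complex.I • J y = J (x - Complex.I • y) := by simp
  rw [inner_eq_sum_norm_sq_div_four, inner_eq_sum_norm_sq_div_four, hI, ← map_add, ← map_sub,
    e₁, e₂, hJ, hJ, hJ, hJ]
  simp [map_div₀, map_ofNat]
  ring

section Ring

variable {R : Type*} [Ring R] {a a' b t : R}

theorem Commute.of_inverse_one_add (h₁ : t * (1 + a) = 1) (h₂ : (1 + a) * t = 1)
    (h : Commute a b) : Commute t b :=
  ((Commute.one_left b).add_left h).units_inv_left (u := ⟨1 + a, t, h₂, h₁⟩)

theorem mul_mul_eq_mul_self_mul (h₁ : t * (1 + b * b) = 1) (h₂ : (1 + b * b) * t = 1) :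
    b * t * b = b * b * t := by
  rw [mul_assoc, ((Commute.refl b).mul_left (Commute.refl b)).of_inverse_one_add h₁ h₂ |>.eq,
    mul_assoc]

theorem mul_mul_one_add_eq_one (ha : a' * a = 1) (h₁ : t * (1 + a') = 1)
    (h₂ : (1 + a') * t = 1) : a' * t * (1 + a) = 1 :=
  calc a' * t * (1 + a) = t * (a' + a' * a) := by
        rw [← (Commute.refl a').of_inverse_one_add h₁ h₂ |>.eq]; noncomm_ring
    _ = t * (1 + a') := by rw [ha, add_comm]
    _ = 1 := h₁

end Ring

section Modular

variable {E : Type*} [NormedAddCommGroup E] [InnerProductSpace ℂ E] {J : E →ₗ⋆[ℂ] E}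
  {A Ainv B T : E →L[ℂ] E}

theorem conj_apply_inverse (hJA : ∀ x, J (A x) = Ainv (J x)) (hAinv₁ : A ∘L Ainv = 1) (x : E) :
    J (Ainv x) = A (J x) :=
  Function.Semiconj.inverses_right hJA (DFunLike.congr_fun hAinv₁) (DFunLike.congr_fun hAinv₁) x

theorem conj_apply_inverse_one_add (hJA : ∀ x, J (A x) = Ainv (J x)) (hAinv₁ : A ∘L Ainv = 1)
    (hAinv₂ : Ainv ∘L A = 1) (hT₁ : T ∘L (1 + Ainv) = 1) (hT₂ : (1 + Ainv) ∘L T = 1) (x : E) :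
    J (T x) = Ainv (T (J x)) := by
  have hsemi : Function.Semiconj J ⇑(1 + Ainv) ⇑(1 + A) := fun y => by
    simp [conj_apply_inverse hJA hAinv₁]
  have hleft : Function.LeftInverse ⇑(Ainv * T) ⇑(1 + A) :=
    DFunLike.congr_fun (mul_mul_one_add_eq_one hAinv₂ hT₁ hT₂)
  exact hsemi.inverses_right (DFunLike.congr_fun hT₂) hleft x

theorem conj_inner_apply_eq_inner_apply_sqrt (hJ : ∀ x, ‖J x‖ = ‖x‖)
    (hJA : ∀ x, J (A x) = Ainv (J x)) (hAinv₁ : A ∘L Ainv = 1) (hAinv₂ : Ainv ∘L A = 1)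
    (hB : (B : E →ₗ[ℂ] E).IsSymmetric) (hBB : B ∘L B = Ainv)
    (hT₁ : T ∘L (1 + Ainv) = 1) (hT₂ : (1 + Ainv) ∘L T = 1) {x y : E} (hx : J x = x)
    (hy : J y = y) : conj (inner ℂ (T x) y) = inner ℂ (T (B x)) (B y) := by
  have hBTB : B * T * B = Ainv * T := by
    subst hBB
    exact mul_mul_eq_mul_self_mul hT₁ hT₂
  calc conj (inner ℂ (T x) y) = inner ℂ (J (T x)) (J y) :=
        (inner_map_map_of_conj_norm_map J hJ _ _).symm
    _ = inner ℂ (Ainv (T x)) y := by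
        rw [conj_apply_inverse_one_add hJA hAinv₁ hAinv₂ hT₁ hT₂, hx, hy]
    _ = inner ℂ (B (T (B x))) y :=
        congrArg (fun v => inner ℂ v y) (DFunLike.congr_fun hBTB x).symm
    _ = inner ℂ (T (B x)) (B y) := hB _ _

end Modular

section Fock

variable {q : ℝ} {T B : H →L[ℂ] H} {J : H →ₗ⋆[ℂ] H}
  {JF : TensorAlgebra ℂ H →ₗ⋆[ℂ] TensorAlgebra ℂ H}
  (hJF : ∀ (n : ℕ) (v : Fin n → H), JF (st n v) = st n fun i => B (J (v i.rev)))
include hJF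

theorem map_creation_st {c r : H → Module.End ℂ (TensorAlgebra ℂ H)} (hc : IsCreation c)
    (hr : IsRightCreation r) (ξ : H) {n : ℕ} (η : Fin n → H) :
    JF (c ξ (st n η)) = r (B (J ξ)) (JF (st n η)) := by
  rw [hc, hJF, hJF, hr]
  congr 1
  funext i
  rw [Fin.cons_rev]
  exact congrFun (Fin.comp_snoc (fun v => B (J v)) _ ξ) i

theorem map_annihilation_st {a rs : H → Module.End ℂ (TensorAlgebra ℂ H)}
    (ha : IsAnnihilationU q T a) (hrs : IsRightAnnihilationU q T rs) (ξ ζ : H) {n : ℕ}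
    (η : Fin n → H) (hU : ∀ i, conj (inner ℂ (T ξ) (η i)) = inner ℂ (T ζ) (B (J (η i)))) :
    JF (a ξ (st n η)) = rs ζ (JF (st n η)) := by
  rw [ha, map_sum, hJF, hrs]
  refine Fintype.sum_equiv Fin.revPerm _ _ fun i => ?_
  have hexp : n - 1 - (n - (i + 1)) = i := by omega
  rw [map_smulₛₗ, hJF, Fin.revPerm_apply, removeNth_rev_comp (fun v => B (J v)), Fin.rev_rev,
    ← hU, Fin.val_rev, hexp, map_mul, map_mul, map_pow, Complex.conj_ofReal, map_ofNat]

end Fock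

theorem stmt15_general {H : Type*} [NormedAddCommGroup H] [InnerProductSpace ℂ H]
    (J : H →ₗ⋆[ℂ] H) (hJiso : ∀ x, ‖J x‖ = ‖x‖)
    (A Ainv B T : H →L[ℂ] H)
    (hAinv₁ : A ∘L Ainv = 1) (hAinv₂ : Ainv ∘L A = 1)
    (hB : B.IsPositive) (hBB : B ∘L B = Ainv)
    (hJA : ∀ x, J (A x) = Ainv (J x))
    (hT₁ : T ∘L (1 + Ainv) = 1) (hT₂ : (1 + Ainv) ∘L T = 1)
    (q : ℝ) (c a r rs : H → Module.End ℂ (TensorAlgebra ℂ H))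
    (hc : IsCreation c) (ha : IsAnnihilationU q T a)
    (hr : IsRightCreation r) (hrs : IsRightAnnihilationU q T rs)
    (JF : TensorAlgebra ℂ H →ₗ⋆[ℂ] TensorAlgebra ℂ H)
    (hJF : ∀ (n : ℕ) (v : Fin n → H),
      JF (st n v) = st n fun i => B (J (v i.rev)))
    (ξ : H) (hξ : J ξ = ξ) (n : ℕ) (η : Fin n → H) (hη : ∀ i, J (η i) = η i) :
    JF ((c ξ + a ξ) (st n η)) = (r (B ξ) + rs (B ξ)) (JF (st n η)) ∧
    JF (st n η) = st n (fun i => B (η i.rev)) := by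
  have hU : ∀ i, conj (inner ℂ (T ξ) (η i)) = inner ℂ (T (B ξ)) (B (J (η i))) := fun i => by
    rw [hη]
    exact conj_inner_apply_eq_inner_apply_sqrt hJiso hJA hAinv₁ hAinv₂ hB.isSymmetric hBB hT₁ hT₂
      hξ (hη i)
  refine ⟨?_, by simp only [hJF, hη]⟩
  rw [LinearMap.add_apply, LinearMap.add_apply, map_add, map_creation_st hJF hc hr, hξ,
    map_annihilation_st hJF ha hrs ξ (B ξ) η hU]

/-- Bounded modular setting: `J` is a conjugation, `A` a bounded positive invertible
operator with inverse `Ainv` satisfying `J A J = A⁻¹`, `B` is the positive square root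
of `A⁻¹`, `T = (1 + A⁻¹)⁻¹`, and the operators `c, a, r, rs` on the algebraic Fock
space are built from the inner product `⟨ξ, η⟩_U = 2⟨T ξ, η⟩`. Let `JF` be the
conjugate-linear map on Fock space with `JF Ω = Ω` and
`JF (v₁⊗⋯⊗vₙ) = A^{-1/2}𝒥vₙ ⊗ ⋯ ⊗ A^{-1/2}𝒥v₁`. Then for `ξ ∈ H_ℝ` and
`η₁, …, ηₙ ∈ H_ℝ` one has `JF (s_ξ (η₁⊗⋯⊗ηₙ)) = d_{A^{-1/2}ξ} (JF (η₁⊗⋯⊗ηₙ))`,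
and in particular `JF (η₁⊗⋯⊗ηₙ) = A^{-1/2}ηₙ ⊗ ⋯ ⊗ A^{-1/2}η₁`. -/
theorem stmt15 {H : Type*} [NormedAddCommGroup H] [InnerProductSpace ℂ H] [CompleteSpace H]
    (J : H →ₗ⋆[ℂ] H) (hJ2 : ∀ x, J (J x) = x) (hJiso : ∀ x, ‖J x‖ = ‖x‖)
    (A Ainv B T : H →L[ℂ] H)
    (hA : A.IsPositive) (hAinv₁ : A ∘L Ainv = 1) (hAinv₂ : Ainv ∘L A = 1)
    (hB : B.IsPositive) (hBB : B ∘L B = Ainv)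
    (hJA : ∀ x, J (A x) = Ainv (J x))
    (hT₁ : T ∘L (1 + Ainv) = 1) (hT₂ : (1 + Ainv) ∘L T = 1)
    (q : ℝ) (c a r rs : H → Module.End ℂ (TensorAlgebra ℂ H))
    (hc : IsCreation c) (ha : IsAnnihilationU q T a)
    (hr : IsRightCreation r) (hrs : IsRightAnnihilationU q T rs)
    (JF : TensorAlgebra ℂ H →ₗ⋆[ℂ] TensorAlgebra ℂ H)
    (hJF : ∀ (n : ℕ) (v : Fin n → H),
      JF (st n v) = st n fun i => B (J (v i.rev)))
    (ξ : H) (hξ : J ξ = ξ) (n : ℕ) (η : Fin n → H) (hη : ∀ i, J (η i) = η i) :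
    JF ((c ξ + a ξ) (st n η)) = (r (B ξ) + rs (B ξ)) (JF (st n η)) ∧
    JF (st n η) = st n (fun i => B (η i.rev)) :=
  stmt15_general J hJiso A Ainv B T hAinv₁ hAinv₂ hB hBB hJA hT₁ hT₂ q c a r rs hc ha hr hrs JF hJF
    ξ hξ n η hη
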